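/- arXiv:1905.01332 — 3 statements merged into one kernel-verified Lean document; each statement's English description precedes it below -/
import Mathlib

section
/- Let φ: ℝⁿ → ℝ be continuously differentiable with L-Lipschitz gradient, and let f: ℝⁿ → ℝ satisfy |f(x) - φ(x)| ≤ ε_f for all x. Let g(x) ∈ ℝⁿ be the forward finite difference approximation with components g(x)_i = (f(x + σ e_i) - f(x))/σ for σ > 0, where e_i are the standard basis vectors. Then ‖g(x) - ∇φ(x)‖ ≤ (√n · L · σ)/2 + (2√n · ε_f)/σ for all x. -/
/-!
Along a unit vector `e`, the forward difference `(f (x + σ e) - f x) / σ` differs from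
`⟪∇φ x, e⟫` by the Taylor remainder of `φ`, at most `L σ² / 2` for an `L`-Lipschitz gradient,
plus the noise `f - φ` at two points, at most `2 ε_f`, all divided by `σ`. Applying this to
the `n` vectors of the standard basis bounds each coordinate of the error, whence the factor `√n`.
-/

open Set
open scoped RealInnerProductSpace

section

variable {F : Type*} [NormedAddCommGroup F] [InnerProductSpace ℝ F]

/- Fencing argument on `t ↦ φ (x + t • v) - φ x - t ⟪∇φ x, v⟫`, whose derivative is bounded by
`L t ‖v‖²`, against `t ↦ L ‖v‖² t² / 2`. -/
theorem abs_sub_sub_inner_gradient_le [CompleteSpace F] {φ : F → ℝ} {L : ℝ} {x : F}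
    (hφ : Differentiable ℝ φ) (hlip : ∀ y, ‖gradient φ y - gradient φ x‖ ≤ L * ‖y - x‖) (v : F) :
    |φ (x + v) - φ x - ⟪gradient φ x, v⟫| ≤ L * ‖v‖ ^ 2 / 2 := by
  set h : ℝ → ℝ := fun t => φ (x + t • v) - φ x - t * ⟪gradient φ x, v⟫
  have hderiv : ∀ t, HasDerivAt h ⟪gradient φ (x + t • v) - gradient φ x, v⟫ t := by
    intro t
    have hline : HasDerivAt (fun t : ℝ => x + t • v) v t := by
      simpa using ((hasDerivAt_id t).smul_const v).const_add x
    have hcomp := (hφ (x + t • v)).hasGradientAt.hasFDerivAt.comp_hasDerivAt t hline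
    rw [InnerProductSpace.toDual_apply_apply] at hcomp
    exact ((hcomp.sub_const (φ x)).sub ((hasDerivAt_id t).mul_const _)).congr_deriv
      (by rw [inner_sub_left, one_mul])
  have hbound : ∀ t ∈ Ico (0 : ℝ) 1,
      ‖⟪gradient φ (x + t • v) - gradient φ x, v⟫‖ ≤ L * ‖v‖ ^ 2 * t := by
    rintro t ⟨ht, -⟩
    calc ‖⟪gradient φ (x + t • v) - gradient φ x, v⟫‖
        ≤ ‖gradient φ (x + t • v) - gradient φ x‖ * ‖v‖ := norm_inner_le_norm _ _
      _ ≤ L * ‖x + t • v - x‖ * ‖v‖ := by gcongr; exact hlip _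
      _ = L * ‖v‖ ^ 2 * t := by
        rw [add_sub_cancel_left, norm_smul, Real.norm_of_nonneg ht]; ring
  have hfence := image_norm_le_of_norm_deriv_right_le_deriv_boundary
    (fun t _ => (hderiv t).continuousAt.continuousWithinAt)
    (fun t _ => (hderiv t).hasDerivWithinAt) (B := fun t => L * ‖v‖ ^ 2 / 2 * t ^ 2)
    (by simp [h])
    (fun t => ((hasDerivAt_pow 2 t).const_mul (L * ‖v‖ ^ 2 / 2)).congr_deriv (by ring))
    hbound (right_mem_Icc.2 zero_le_one)
  simpa [h] using hfence

theorem abs_forward_diff_sub_inner_gradient_le [CompleteSpace F] {φ f : F → ℝ} {L ε σ : ℝ}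
    {x e : F} (hφ : Differentiable ℝ φ)
    (hlip : ∀ y, ‖gradient φ y - gradient φ x‖ ≤ L * ‖y - x‖) (hf : ∀ y, |f y - φ y| ≤ ε)
    (hσ : 0 < σ) (he : ‖e‖ = 1) :
    |(f (x + σ • e) - f x) / σ - ⟪gradient φ x, e⟫| ≤ L * σ / 2 + 2 * ε / σ := by
  have htaylor := abs_sub_sub_inner_gradient_le hφ hlip (σ • e)
  rw [norm_smul, he, Real.norm_of_nonneg hσ.le, inner_smul_right] at htaylor
  have hnoise : |f (x + σ • e) - f x - (φ (x + σ • e) - φ x)| ≤ 2 * ε := by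
    rw [sub_sub_sub_comm, two_mul]
    exact (abs_sub _ _).trans (add_le_add (hf _) (hf _))
  have hsplit : (f (x + σ • e) - f x) / σ - ⟪gradient φ x, e⟫
      = ((f (x + σ • e) - f x - (φ (x + σ • e) - φ x))
        + (φ (x + σ • e) - φ x - σ * ⟪gradient φ x, e⟫)) / σ := by
    field_simp; ring
  rw [hsplit, abs_div, abs_of_pos hσ, div_le_iff₀ hσ]
  calc _ ≤ 2 * ε + L * (σ * 1) ^ 2 / 2 := (abs_add_le _ _).trans (add_le_add hnoise htaylor)
    _ = (L * σ / 2 + 2 * ε / σ) * σ := by field_simp; ring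

theorem OrthonormalBasis.norm_le_sqrt_card_mul_of_abs_inner_le {ι : Type*} [Fintype ι]
    (b : OrthonormalBasis ι ℝ F) {y : F} {c : ℝ} (hc : ∀ i, |⟪b i, y⟫| ≤ c) :
    ‖y‖ ≤ √(Fintype.card ι) * c := by
  refine (b.norm_le_card_mul_iSup_norm_inner y).trans ?_
  cases isEmpty_or_nonempty ι with
  | inl _ => simp
  | inr _ =>
    gcongr
    exact ciSup_le hc

end

theorem ffd_error_bound_general (n : ℕ)
    (φ f : EuclideanSpace ℝ (Fin n) → ℝ)
    (L εf σ : ℝ) (hσ : 0 < σ)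
    (hφ : ContDiff ℝ 1 φ)
    (hlip : ∀ x y, ‖gradient φ x - gradient φ y‖ ≤ L * ‖x - y‖)
    (hf : ∀ x, |f x - φ x| ≤ εf)
    (g : EuclideanSpace ℝ (Fin n) → EuclideanSpace ℝ (Fin n))
    (hg : ∀ x i, g x i = (f (x + σ • EuclideanSpace.single i 1) - f x) / σ) :
    ∀ x, ‖g x - gradient φ x‖ ≤ Real.sqrt n * L * σ / 2 + 2 * Real.sqrt n * εf / σ := by
  intro x
  set b := EuclideanSpace.basisFun (Fin n) ℝ
  have hcoord : ∀ i, |⟪b i, g x - gradient φ x⟫| ≤ L * σ / 2 + 2 * εf / σ := by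
    intro i
    have hbi : b i = EuclideanSpace.single i 1 := EuclideanSpace.basisFun_apply _ _ i
    rw [real_inner_comm, inner_sub_left, hbi, EuclideanSpace.inner_single_right, hg, ← hbi]
    simp only [one_mul, conj_trivial]
    exact abs_forward_diff_sub_inner_gradient_le (hφ.differentiable one_ne_zero)
      (fun y => hlip y x) hf hσ (b.norm_eq_one i)
  calc ‖g x - gradient φ x‖ ≤ √(Fintype.card (Fin n)) * (L * σ / 2 + 2 * εf / σ) :=
        b.norm_le_sqrt_card_mul_of_abs_inner_le hcoord
    _ = Real.sqrt n * L * σ / 2 + 2 * Real.sqrt n * εf / σ := by rw [Fintype.card_fin]; ring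

/-- Forward finite difference gradient approximation error bound. -/
theorem ffd_error_bound (n : ℕ) (hn : 0 < n)
    (φ f : EuclideanSpace ℝ (Fin n) → ℝ)
    (L εf σ : ℝ) (hL : 0 ≤ L) (hε : 0 ≤ εf) (hσ : 0 < σ)
    (hφ : ContDiff ℝ 1 φ)
    (hlip : ∀ x y, ‖gradient φ x - gradient φ y‖ ≤ L * ‖x - y‖)
    (hf : ∀ x, |f x - φ x| ≤ εf)
    (g : EuclideanSpace ℝ (Fin n) → EuclideanSpace ℝ (Fin n))
    (hg : ∀ x i, g x i = (f (x + σ • EuclideanSpace.single i 1) - f x) / σ) :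
    ∀ x, ‖g x - gradient φ x‖ ≤ Real.sqrt n * L * σ / 2 + 2 * Real.sqrt n * εf / σ :=
  ffd_error_bound_general n φ f L εf σ hσ hφ hlip hf g hg
end

section
/- Let φ: ℝⁿ → ℝ have L-Lipschitz gradient, f satisfy |f - φ| ≤ ε_f, and let u_1, ..., u_n with ‖u_i‖ ≤ 1 give a nonsingular interpolation matrix Q. If the interpolation gradient g(x) is computed with sampling radius σ satisfying 2√(ε_f/L) ≤ σ ≤ θ‖∇φ(x)‖/(‖Q⁻¹‖ √n L), then ‖g(x) - ∇φ(x)‖ ≤ θ ‖∇φ(x)‖. -/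
/-!
Each interpolation condition has residual `|f(x + σuᵢ) - f(x) - σ⟪∇φ(x), uᵢ⟫| ≤ Lσ²/2 + 2ε_f`
(the descent lemma for `φ` plus twice the noise), so `Q (g(x) - ∇φ(x))` has entries of size at
most `Lσ/2 + 2ε_f/σ`, and inverting `Q` costs the factor `‖Q⁻¹‖ √n`. The lower bound on `σ`
makes the noise term `2ε_f/σ` at most `Lσ/2`, and the upper bound on `σ` then turns
`‖Q⁻¹‖ √n L σ` into `θ ‖∇φ(x)‖`.
-/

open Set
open scoped RealInnerProductSpace Gradient

section Taylor

variable {E F : Type*} [NormedAddCommGroup E] [NormedSpace ℝ E]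
  [NormedAddCommGroup F] [NormedSpace ℝ F]

theorem norm_sub_sub_fderiv_le_of_lipschitz {f : E → F} {L : ℝ} {x : E}
    (hf : Differentiable ℝ f) (hlip : ∀ y, ‖fderiv ℝ f y - fderiv ℝ f x‖ ≤ L * ‖y - x‖)
    (v : E) : ‖f (x + v) - f x - fderiv ℝ f x v‖ ≤ L / 2 * ‖v‖ ^ 2 := by
  -- The mean value inequality would lose the factor 1/2; fencing `h` by `L‖v‖²t²/2` keeps it.
  set h : ℝ → F := fun t => f (x + t • v) - f x - t • fderiv ℝ f x v
  have hderiv (t : ℝ) : HasDerivAt h (fderiv ℝ f (x + t • v) v - fderiv ℝ f x v) t := by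
    have hline : HasDerivAt (fun t : ℝ => x + t • v) v t := by
      simpa using ((hasDerivAt_id t).smul_const v).const_add x
    exact (((hf _).hasFDerivAt.comp_hasDerivAt t hline).sub_const (f x)).sub
      ((hasDerivAt_id t).smul_const _ |>.congr_deriv (one_smul ℝ _))
  have hbound : ∀ t ∈ Ico (0 : ℝ) 1,
      ‖fderiv ℝ f (x + t • v) v - fderiv ℝ f x v‖ ≤ L * ‖v‖ ^ 2 * t := fun t ht =>
    calc ‖fderiv ℝ f (x + t • v) v - fderiv ℝ f x v‖
        = ‖(fderiv ℝ f (x + t • v) - fderiv ℝ f x) v‖ := rfl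
      _ ≤ L * ‖x + t • v - x‖ * ‖v‖ :=
          ((fderiv ℝ f (x + t • v) - fderiv ℝ f x).le_opNorm v).trans
            (mul_le_mul_of_nonneg_right (hlip _) (norm_nonneg v))
      _ = L * ‖v‖ ^ 2 * t := by
          rw [add_sub_cancel_left, norm_smul, Real.norm_of_nonneg ht.1]; ring
  have hB (t : ℝ) : HasDerivAt (fun t => L / 2 * ‖v‖ ^ 2 * t ^ 2) (L * ‖v‖ ^ 2 * t) t := by
    refine ((hasDerivAt_pow 2 t).const_mul (L / 2 * ‖v‖ ^ 2)).congr_deriv ?_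
    norm_num; ring
  simpa [h] using image_norm_le_of_norm_deriv_right_le_deriv_boundary
    (fun t _ => (hderiv t).continuousAt.continuousWithinAt)
    (fun t _ => (hderiv t).hasDerivWithinAt) (by simp [h]) hB hbound
    (right_mem_Icc.2 zero_le_one)

end Taylor

section Gradient

variable {E : Type*} [NormedAddCommGroup E] [InnerProductSpace ℝ E] [CompleteSpace E]

theorem norm_gradient_sub_gradient (φ : E → ℝ) (x y : E) :
    ‖∇ φ x - ∇ φ y‖ = ‖fderiv ℝ φ x - fderiv ℝ φ y‖ := by
  rw [← toDual_gradient, ← toDual_gradient, ← map_sub, LinearIsometryEquiv.norm_map]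

theorem abs_sub_sub_inner_gradient_le_of_lipschitz {φ : E → ℝ} {L : ℝ} {x : E}
    (hφ : Differentiable ℝ φ) (hlip : ∀ y, ‖∇ φ y - ∇ φ x‖ ≤ L * ‖y - x‖) (v : E) :
    |φ (x + v) - φ x - ⟪∇ φ x, v⟫| ≤ L / 2 * ‖v‖ ^ 2 := by
  rw [inner_gradient_left, ← Real.norm_eq_abs]
  exact norm_sub_sub_fderiv_le_of_lipschitz hφ
    (fun y => norm_gradient_sub_gradient φ y x ▸ hlip y) v

theorem abs_sub_sub_inner_gradient_le_of_abs_sub_le {φ f : E → ℝ} {L ε : ℝ} {x : E}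
    (hφ : Differentiable ℝ φ) (hlip : ∀ y, ‖∇ φ y - ∇ φ x‖ ≤ L * ‖y - x‖)
    (hf : ∀ y, |f y - φ y| ≤ ε) (v : E) :
    |f (x + v) - f x - ⟪∇ φ x, v⟫| ≤ L / 2 * ‖v‖ ^ 2 + 2 * ε := by
  have htaylor := abs_sub_sub_inner_gradient_le_of_lipschitz hφ hlip v
  calc |f (x + v) - f x - ⟪∇ φ x, v⟫|
      = |(φ (x + v) - φ x - ⟪∇ φ x, v⟫) + (f (x + v) - φ (x + v)) - (f x - φ x)| := by
        ring_nf
    _ ≤ |φ (x + v) - φ x - ⟪∇ φ x, v⟫| + |f (x + v) - φ (x + v)| + |f x - φ x| :=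
        (abs_sub _ _).trans (by gcongr; exact abs_add_le _ _)
    _ ≤ L / 2 * ‖v‖ ^ 2 + 2 * ε := by linarith [hf (x + v), hf x]

end Gradient

theorem EuclideanSpace.norm_le_sqrt_card_mul {𝕜 ι : Type*} [RCLike 𝕜] [Fintype ι]
    {v : EuclideanSpace 𝕜 ι} {c : ℝ} (hv : ∀ i, ‖v i‖ ≤ c) : ‖v‖ ≤ √(Fintype.card ι) * c := by
  rcases isEmpty_or_nonempty ι with hι | ⟨⟨i⟩⟩
  · simp [Subsingleton.elim v 0]
  have hc : 0 ≤ c := (norm_nonneg _).trans (hv i)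
  rw [EuclideanSpace.norm_eq, ← Real.sqrt_sq hc, ← Real.sqrt_mul (Nat.cast_nonneg _)]
  gcongr
  calc ∑ i, ‖v i‖ ^ 2 ≤ ∑ _i : ι, c ^ 2 := by
        gcongr with i; exact hv i
    _ = Fintype.card ι * c ^ 2 := by simp

open Matrix WithLp in
theorem Matrix.norm_sub_le_of_norm_mulVec_sub_le {𝕜 ι : Type*} [RCLike 𝕜] [Fintype ι]
    [DecidableEq ι] {Q : Matrix ι ι 𝕜} (hQ : IsUnit Q.det) {a b : EuclideanSpace 𝕜 ι} {δ : ℝ}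
    (h : ∀ i, ‖(Q *ᵥ ofLp a) i - (Q *ᵥ ofLp b) i‖ ≤ δ) :
    ‖a - b‖ ≤ ‖LinearMap.toContinuousLinearMap (toEuclideanLin Q⁻¹)‖ *
      (√(Fintype.card ι) * δ) := by
  have hinv : a - b = toEuclideanLin Q⁻¹ (toEuclideanLin Q (a - b)) := by
    simp [toLpLin_apply, mulVec_mulVec, nonsing_inv_mul Q hQ]
  rw [hinv]
  refine ((LinearMap.toContinuousLinearMap (toEuclideanLin Q⁻¹)).le_opNorm _).trans ?_
  gcongr
  refine EuclideanSpace.norm_le_sqrt_card_mul fun i => ?_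
  simpa [toLpLin_apply, mulVec_sub] using h i

open Matrix WithLp in
theorem norm_interpolation_gradient_sub_gradient_le {ι : Type*} [Fintype ι] [DecidableEq ι]
    {φ f : EuclideanSpace ℝ ι → ℝ} {L εf σ : ℝ} {x : EuclideanSpace ℝ ι}
    (hL : 0 ≤ L) (hσ : 0 < σ) (hφ : Differentiable ℝ φ)
    (hlip : ∀ y, ‖∇ φ y - ∇ φ x‖ ≤ L * ‖y - x‖) (hf : ∀ y, |f y - φ y| ≤ εf)
    {u : ι → EuclideanSpace ℝ ι} (hu : ∀ i, ‖u i‖ ≤ 1)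
    {Q : Matrix ι ι ℝ} (hQ : Q = of fun i j => u i j) (hQinv : IsUnit Q.det)
    {gx : EuclideanSpace ℝ ι} (hg : σ • Q *ᵥ ofLp gx = fun i => f (x + σ • u i) - f x) :
    ‖gx - ∇ φ x‖ ≤ ‖LinearMap.toContinuousLinearMap (toEuclideanLin Q⁻¹)‖ *
      (√(Fintype.card ι) * L * σ / 2 + 2 * √(Fintype.card ι) * εf / σ) := by
  have hrow (i : ι) : (Q *ᵥ ofLp gx) i - (Q *ᵥ ofLp (∇ φ x)) i =
      σ⁻¹ * (f (x + σ • u i) - f x - ⟪∇ φ x, σ • u i⟫) := by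
    have hgi := congrFun hg i
    simp only [Pi.smul_apply, smul_eq_mul] at hgi
    have hQi : (Q *ᵥ ofLp (∇ φ x)) i = ⟪∇ φ x, u i⟫ := by
      simp only [hQ, mulVec, dotProduct, of_apply, PiLp.inner_apply, RCLike.inner_apply,
        conj_trivial]
    rw [hQi, real_inner_smul_right, ← hgi]
    field_simp [hσ.ne']
  have hstep (i : ι) : ‖(Q *ᵥ ofLp gx) i - (Q *ᵥ ofLp (∇ φ x)) i‖ ≤
      σ⁻¹ * (L / 2 * σ ^ 2 + 2 * εf) := by
    have hσu : ‖σ • u i‖ ≤ σ := by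
      simpa [norm_smul, abs_of_pos hσ] using mul_le_mul_of_nonneg_left (hu i) hσ.le
    rw [hrow, Real.norm_eq_abs, abs_mul, abs_of_pos (inv_pos.2 hσ)]
    gcongr
    exact (abs_sub_sub_inner_gradient_le_of_abs_sub_le hφ hlip hf _).trans (by gcongr)
  refine (Matrix.norm_sub_le_of_norm_mulVec_sub_le hQinv hstep).trans_eq ?_
  field_simp

theorem four_mul_le_mul_sq_of_two_mul_sqrt_div_le {ε L σ : ℝ} (hε : 0 ≤ ε) (hL : 0 < L)
    (h : 2 * √(ε / L) ≤ σ) : 4 * ε ≤ L * σ ^ 2 := by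
  have hsq : 4 * (ε / L) ≤ σ ^ 2 := by
    have := pow_le_pow_left₀ (by positivity) h 2
    rwa [mul_pow, Real.sq_sqrt (by positivity), (by norm_num : (2 : ℝ) ^ 2 = 4)] at this
  rw [mul_div_assoc', div_le_iff₀ hL] at hsq
  linarith

theorem interpolation_norm_condition_general (n : ℕ)
    (φ f : EuclideanSpace ℝ (Fin n) → ℝ)
    (L εf σ θ : ℝ) (hL : 0 < L) (hε : 0 ≤ εf) (hσ : 0 < σ)
    (hφ : ContDiff ℝ 1 φ)
    (hlip : ∀ x y, ‖gradient φ x - gradient φ y‖ ≤ L * ‖x - y‖)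
    (hf : ∀ x, |f x - φ x| ≤ εf)
    (u : Fin n → EuclideanSpace ℝ (Fin n)) (hu : ∀ i, ‖u i‖ ≤ 1)
    (Q : Matrix (Fin n) (Fin n) ℝ) (hQ : Q = Matrix.of fun i j => u i j)
    (hQinv : IsUnit Q.det)
    (g : EuclideanSpace ℝ (Fin n) → EuclideanSpace ℝ (Fin n))
    (hg : ∀ x, σ • Q.mulVec (fun j => g x j) = fun i => f (x + σ • u i) - f x)
    (x : EuclideanSpace ℝ (Fin n))
    (hσlo : 2 * Real.sqrt (εf / L) ≤ σ)
    (hσhi : σ ≤ θ * ‖gradient φ x‖ /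
      (‖LinearMap.toContinuousLinearMap (Matrix.toEuclideanLin Q⁻¹)‖ * Real.sqrt n * L)) :
    ‖g x - gradient φ x‖ ≤ θ * ‖gradient φ x‖ := by
  set K := ‖LinearMap.toContinuousLinearMap (Matrix.toEuclideanLin Q⁻¹)‖
  have herr := norm_interpolation_gradient_sub_gradient_le hL.le hσ
    (hφ.differentiable one_ne_zero) (fun y => hlip y x) hf hu hQ hQinv (hg x)
  rw [Fintype.card_fin] at herr
  have hnoise : 2 * εf / σ ≤ L * σ / 2 := by
    rw [div_le_div_iff₀ hσ two_pos]
    nlinarith [four_mul_le_mul_sq_of_two_mul_sqrt_div_le hε hL hσlo]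
  have hden : 0 < K * √n * L := by
    refine lt_of_le_of_ne (by positivity) fun h => ?_
    rw [← h, div_zero] at hσhi
    linarith
  calc ‖g x - ∇ φ x‖ ≤ K * (√n * L * σ / 2 + 2 * √n * εf / σ) := herr
    _ = K * √n * (L * σ / 2 + 2 * εf / σ) := by ring
    _ ≤ K * √n * (L * σ) := by gcongr; linarith
    _ = K * √n * L * σ := by ring
    _ ≤ θ * ‖∇ φ x‖ := by rwa [mul_comm, ← le_div_iff₀ hden]

/-- If the sampling radius σ for linear interpolation lies in the prescribed interval,
the interpolation gradient satisfies the norm condition ‖g(x) - ∇φ(x)‖ ≤ θ‖∇φ(x)‖. -/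
theorem interpolation_norm_condition (n : ℕ) (hn : 0 < n)
    (φ f : EuclideanSpace ℝ (Fin n) → ℝ)
    (L εf σ θ : ℝ) (hL : 0 < L) (hε : 0 ≤ εf) (hσ : 0 < σ) (hθ0 : 0 ≤ θ) (hθ1 : θ < 1)
    (hφ : ContDiff ℝ 1 φ)
    (hlip : ∀ x y, ‖gradient φ x - gradient φ y‖ ≤ L * ‖x - y‖)
    (hf : ∀ x, |f x - φ x| ≤ εf)
    (u : Fin n → EuclideanSpace ℝ (Fin n)) (hu : ∀ i, ‖u i‖ ≤ 1)
    (Q : Matrix (Fin n) (Fin n) ℝ) (hQ : Q = Matrix.of fun i j => u i j)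
    (hQinv : IsUnit Q.det)
    (g : EuclideanSpace ℝ (Fin n) → EuclideanSpace ℝ (Fin n))
    (hg : ∀ x, σ • Q.mulVec (fun j => g x j) = fun i => f (x + σ • u i) - f x)
    (x : EuclideanSpace ℝ (Fin n))
    (hσlo : 2 * Real.sqrt (εf / L) ≤ σ)
    (hσhi : σ ≤ θ * ‖gradient φ x‖ /
      (‖LinearMap.toContinuousLinearMap (Matrix.toEuclideanLin Q⁻¹)‖ * Real.sqrt n * L)) :
    ‖g x - gradient φ x‖ ≤ θ * ‖gradient φ x‖ :=
  interpolation_norm_condition_general n φ f L εf σ θ hL hε hσ hφ hlip hf u hu Q hQ hQinv g hg x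
    hσlo hσhi
end

section
/- Suppose θ ∈ (0,1), M > 0, ε_f ≥ 0, n a positive integer. If σ > 0 satisfies (6ε_f/M)^{1/3} ≤ σ ≤ √(3θ‖∇φ(x)‖/(√n M)) and ‖g(x) - ∇φ(x)‖ ≤ √n M σ²/6 + √n ε_f/σ, then ‖g(x) - ∇φ(x)‖ ≤ θ‖∇φ(x)‖. The interval for σ is nonempty whenever ‖∇φ(x)‖ ≥ (2/6^{1/3}) √n (M ε_f²)^{1/3}/θ. -/
/-!
With `σ³ ≥ 6 ε_f / M` the noise term `√n ε_f / σ` is at most the truncation term `√n M σ² / 6`,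
so the error is at most `√n M σ² / 3`, which the upper end of the interval bounds by `θ ‖∇φ‖`.
The interval is nonempty iff `√n M (6 ε_f / M)^{2/3} ≤ 3 θ ‖∇φ‖`, and
`6^{1/3} M (6 ε_f / M)^{2/3} = 6 (M ε_f²)^{1/3}`, as one checks by cubing both sides.
-/

open Real

theorem rpow_one_div_three_pow_three {a : ℝ} (ha : 0 ≤ a) : (a ^ ((1 : ℝ) / 3)) ^ 3 = a := by
  rw [one_div]
  exact_mod_cast rpow_inv_natCast_pow ha three_ne_zero

theorem le_pow_three_of_rpow_one_div_three_le {a σ : ℝ} (ha : 0 ≤ a)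
    (h : a ^ ((1 : ℝ) / 3) ≤ σ) : a ≤ σ ^ 3 := by
  simpa only [rpow_one_div_three_pow_three ha] using pow_le_pow_left₀ (by positivity) h 3

theorem div_le_of_div_le_pow_three {M εf σ : ℝ} (hM : 0 < M) (hσ : 0 < σ)
    (h : 6 * εf / M ≤ σ ^ 3) : εf / σ ≤ M * σ ^ 2 / 6 := by
  rw [div_le_iff₀ hM] at h
  rw [div_le_div_iff₀ hσ (by norm_num)]
  linarith

theorem le_mul_of_mem_sigma_interval {s M εf σ θ G e : ℝ} (hs : 0 < s) (hM : 0 < M)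
    (hε : 0 ≤ εf) (hσ : 0 < σ) (hlo : (6 * εf / M) ^ ((1 : ℝ) / 3) ≤ σ)
    (hhi : σ ≤ √(3 * θ * G / (s * M))) (he : e ≤ s * M * σ ^ 2 / 6 + s * εf / σ) :
    e ≤ θ * G := by
  have hnoise : s * εf / σ ≤ s * M * σ ^ 2 / 6 := by
    have := div_le_of_div_le_pow_three hM hσ
      (le_pow_three_of_rpow_one_div_three_le (by positivity) hlo)
    rw [mul_div_assoc, mul_assoc, mul_div_assoc]
    exact mul_le_mul_of_nonneg_left this hs.le
  have htrunc : σ ^ 2 * (s * M) ≤ 3 * θ * G :=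
    (le_div_iff₀ (by positivity)).1 ((le_sqrt' hσ).1 hhi)
  linarith

theorem rpow_one_div_three_mul_eq {M εf : ℝ} (hM : 0 < M) (hε : 0 ≤ εf) :
    (6 : ℝ) ^ ((1 : ℝ) / 3) * (M * ((6 * εf / M) ^ ((1 : ℝ) / 3)) ^ 2)
      = 6 * (M * εf ^ 2) ^ ((1 : ℝ) / 3) := by
  refine (pow_left_inj₀ (by positivity) (by positivity) three_ne_zero).1 ?_
  have hcube : ((6 * εf / M) ^ ((1 : ℝ) / 3)) ^ 6 = (6 * εf / M) ^ 2 := by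
    rw [show 6 = 3 * 2 by rfl, pow_mul, rpow_one_div_three_pow_three (by positivity)]
  rw [mul_pow, mul_pow, ← pow_mul, hcube, mul_pow, rpow_one_div_three_pow_three (by norm_num),
    rpow_one_div_three_pow_three (by positivity)]
  field_simp

theorem rpow_one_div_three_le_sqrt {s M εf θ G : ℝ} (hs : 0 < s) (hM : 0 < M) (hε : 0 ≤ εf)
    (hθ : 0 < θ)
    (hG : G ≥ 2 / (6 : ℝ) ^ ((1 : ℝ) / 3) * (s * (M * εf ^ 2) ^ ((1 : ℝ) / 3) / θ)) :
    (6 * εf / M) ^ ((1 : ℝ) / 3) ≤ √(3 * θ * G / (s * M)) := by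
  set u := (6 : ℝ) ^ ((1 : ℝ) / 3)
  have hu : 0 < u := by positivity
  have hG' : 2 * (s * (M * εf ^ 2) ^ ((1 : ℝ) / 3)) ≤ u * θ * G := by
    rw [ge_iff_le, div_mul_eq_mul_div, div_le_iff₀ hu, ← mul_div_assoc, div_le_iff₀ hθ] at hG
    linarith
  refine le_sqrt_of_sq_le ((le_div_iff₀ (by positivity)).2 ?_)
  have key := rpow_one_div_three_mul_eq hM hε
  refine le_of_mul_le_mul_left ?_ hu
  linear_combination s * key + 3 * hG'

theorem cfd_sigma_interval_general (n : ℕ) (hn : 0 < n)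
    (M εf σ θ : ℝ) (hM : 0 < M) (hε : 0 ≤ εf) (hσ : 0 < σ) (hθ0 : 0 < θ)
    (g gradφ : EuclideanSpace ℝ (Fin n)) :
    (((6 * εf / M) ^ ((1:ℝ)/3) ≤ σ ∧ σ ≤ Real.sqrt (3 * θ * ‖gradφ‖ / (Real.sqrt n * M)) ∧
        ‖g - gradφ‖ ≤ Real.sqrt n * M * σ ^ 2 / 6 + Real.sqrt n * εf / σ) →
      ‖g - gradφ‖ ≤ θ * ‖gradφ‖) ∧
    (‖gradφ‖ ≥ 2 / (6:ℝ) ^ ((1:ℝ)/3) * (Real.sqrt n * (M * εf ^ 2) ^ ((1:ℝ)/3) / θ) →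
      (6 * εf / M) ^ ((1:ℝ)/3) ≤ Real.sqrt (3 * θ * ‖gradφ‖ / (Real.sqrt n * M))) := by
  have hs : 0 < √(n : ℝ) := sqrt_pos.2 (Nat.cast_pos.2 hn)
  exact ⟨fun ⟨hlo, hhi, he⟩ => le_mul_of_mem_sigma_interval hs hM hε hσ hlo hhi he,
    rpow_one_div_three_le_sqrt hs hM hε hθ0⟩

/-- Sufficient condition on the central finite difference interval σ guaranteeing the
norm condition, together with nonemptiness of the interval for σ. -/
theorem cfd_sigma_interval (n : ℕ) (hn : 0 < n)
    (M εf σ θ : ℝ) (hM : 0 < M) (hε : 0 ≤ εf) (hσ : 0 < σ) (hθ0 : 0 < θ) (hθ1 : θ < 1)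
    (g gradφ : EuclideanSpace ℝ (Fin n)) :
    (((6 * εf / M) ^ ((1:ℝ)/3) ≤ σ ∧ σ ≤ Real.sqrt (3 * θ * ‖gradφ‖ / (Real.sqrt n * M)) ∧
        ‖g - gradφ‖ ≤ Real.sqrt n * M * σ ^ 2 / 6 + Real.sqrt n * εf / σ) →
      ‖g - gradφ‖ ≤ θ * ‖gradφ‖) ∧
    (‖gradφ‖ ≥ 2 / (6:ℝ) ^ ((1:ℝ)/3) * (Real.sqrt n * (M * εf ^ 2) ^ ((1:ℝ)/3) / θ) →
      (6 * εf / M) ^ ((1:ℝ)/3) ≤ Real.sqrt (3 * θ * ‖gradφ‖ / (Real.sqrt n * M))) :=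
  cfd_sigma_interval_general n hn M εf σ θ hM hε hσ hθ0 g gradφ
end
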